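/- Let E be a kernel of type α with 0 < α < n, i.e. E is locally integrable on ℝⁿ, smooth outside the origin, and homogeneous of degree α - n. Then there is a constant C > 0 such that for every f ∈ L¹(ℝⁿ), the convolution f * E belongs to the weak Lebesgue space L^{n/(n-α),∞}(ℝⁿ) with ‖f * E‖_{L^{n/(n-α),∞}} ≤ C ‖f‖_{L¹}. In particular f * E is locally integrable. -/

import Mathlib

open MeasureTheory ENNReal Metric Set

section Aux

variable {X Y : Type*} [MeasurableSpace X] [MeasurableSpace Y] {μ : Measure X} {ν : Measure Y}

/-- A.e.-measurable version of `Measurable.lintegral_prod_right'`. -/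
lemma aux_aemeasurable_lintegral_prod_right [SFinite ν] {f : X × Y → ℝ≥0∞}
    (hf : AEMeasurable f (μ.prod ν)) :
    AEMeasurable (fun x => ∫⁻ y, f (x, y) ∂ν) μ := by
  refine ⟨fun x => ∫⁻ y, hf.mk f (x, y) ∂ν, hf.measurable_mk.lintegral_prod_right', ?_⟩
  filter_upwards [Measure.ae_ae_of_ae_prod hf.ae_eq_mk] with x hx
  exact lintegral_congr_ae hx

end Aux

set_option maxHeartbeats 1600000 in
/-- If `E` is a kernel of type `α ∈ (0,n)` (locally integrable, smooth
off the origin, homogeneous of degree `α - n`), then there is `C > 0` such that for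
every `f ∈ L¹(ℝⁿ)`, `f * E` lies in weak `L^{n/(n-α)}` with
`‖f * E‖_{L^{n/(n-α),∞}} ≤ C ‖f‖₁`; in particular f * E is locally integrable. -/
theorem stmt4 (n : ℕ) (hn : 1 ≤ n) (α : ℝ) (hα0 : 0 < α) (hαn : α < n)
    (E : EuclideanSpace ℝ (Fin n) → ℝ)
    (hEloc : LocallyIntegrable E volume)
    (hEsmooth : ContDiffOn ℝ (⊤ : ℕ∞) E {(0 : EuclideanSpace ℝ (Fin n))}ᶜ)
    (hEhom : ∀ (c : ℝ), 0 < c → ∀ x : EuclideanSpace ℝ (Fin n), x ≠ 0 →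
      E (c • x) = c ^ (α - n) * E x) :
    ∃ C : ℝ, 0 < C ∧ ∀ f : EuclideanSpace ℝ (Fin n) → ℝ, Integrable f →
      (∀ t : ℝ, 0 < t →
        ENNReal.ofReal t *
            (volume {x : EuclideanSpace ℝ (Fin n) | t < |∫ y, f y * E (x - y)|})
              ^ (((n : ℝ) - α) / n) ≤
          ENNReal.ofReal (C * ∫ y, |f y|)) ∧
      LocallyIntegrable (fun x => ∫ y, f y * E (x - y)) volume := by
  classical
  haveI : Nonempty (Fin n) := ⟨⟨0, by omega⟩⟩
  have hn0 : (0 : ℝ) < n := by exact_mod_cast Nat.pos_of_ne_zero (by omega)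
  have hnα : (0 : ℝ) < (n : ℝ) - α := sub_pos.2 hαn
  set β : ℝ := ((n : ℝ) - α) / n with hβ
  have hβpos : 0 < β := div_pos hnα hn0
  have hE_ae : AEStronglyMeasurable E volume := hEloc.aestronglyMeasurable
  -- bound on the sphere
  obtain ⟨M₀, hM₀⟩ :=
    (isCompact_sphere (0 : EuclideanSpace ℝ (Fin n)) 1).exists_bound_of_continuousOn
      ((hEsmooth.continuousOn).mono (fun x hx => by
        intro h
        rw [Set.mem_singleton_iff] at h
        rw [h, mem_sphere_zero_iff_norm, norm_zero] at hx
        norm_num at hx))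
  set M : ℝ := max M₀ 1 with hM
  have hM1 : (1 : ℝ) ≤ M := le_max_right _ _
  have hMpos : (0 : ℝ) < M := lt_of_lt_of_le one_pos hM1
  -- pointwise bound away from 0
  have hpt : ∀ x : EuclideanSpace ℝ (Fin n), x ≠ 0 → |E x| ≤ M * ‖x‖ ^ (α - (n : ℝ)) := by
    intro x hx0
    have hxn : 0 < ‖x‖ := norm_pos_iff.2 hx0
    have hu : ‖(‖x‖⁻¹ • x : EuclideanSpace ℝ (Fin n))‖ = 1 := by
      rw [norm_smul, norm_inv, norm_norm, inv_mul_cancel₀ hxn.ne']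
    have hu0 : (‖x‖⁻¹ • x : EuclideanSpace ℝ (Fin n)) ≠ 0 := by
      intro h; rw [h, norm_zero] at hu; norm_num at hu
    have hxu : (‖x‖ : ℝ) • (‖x‖⁻¹ • x) = x := by
      rw [smul_smul, mul_inv_cancel₀ hxn.ne', one_smul]
    have hhom := hEhom ‖x‖ hxn _ hu0
    rw [hxu] at hhom
    rw [hhom, abs_mul, abs_of_nonneg (Real.rpow_nonneg hxn.le _), mul_comm]
    have hEu : |E (‖x‖⁻¹ • x)| ≤ M := by
      refine le_trans ?_ (le_max_left M₀ 1)
      simpa [Real.norm_eq_abs] using hM₀ _ (by rwa [mem_sphere_zero_iff_norm])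
    exact mul_le_mul_of_nonneg_right hEu (Real.rpow_nonneg hxn.le _)
  -- finite local mass of E near 0
  set κ : ℝ≥0∞ := ∫⁻ z in ball (0 : EuclideanSpace ℝ (Fin n)) 1, (‖E z‖₊ : ℝ≥0∞) with hκdef
  have hκtop : κ ≠ ⊤ := by
    have h1 : IntegrableOn E (closedBall (0 : EuclideanSpace ℝ (Fin n)) 1) volume :=
      hEloc.integrableOn_isCompact (isCompact_closedBall _ _)
    have h2 : (∫⁻ z in closedBall (0 : EuclideanSpace ℝ (Fin n)) 1, (‖E z‖₊ : ℝ≥0∞)) < ⊤ := h1.2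
    exact ne_of_lt (lt_of_le_of_lt (lintegral_mono_set ball_subset_closedBall) h2)
  set κ' : ℝ := κ.toReal with hκ'
  have hκ'0 : 0 ≤ κ' := ENNReal.toReal_nonneg
  have hκeq : κ = ENNReal.ofReal κ' := (ENNReal.ofReal_toReal hκtop).symm
  -- scaling of local mass
  have hscale : ∀ R : ℝ, 0 < R →
      (∫⁻ z in ball (0 : EuclideanSpace ℝ (Fin n)) R, (‖E z‖₊ : ℝ≥0∞)) = ENNReal.ofReal (R ^ α) * κ := by
    intro R hR
    haveI : Nonempty (Fin n) := ⟨⟨0, by omega⟩⟩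
    set g : EuclideanSpace ℝ (Fin n) → ℝ≥0∞ :=
      (ball (0 : EuclideanSpace ℝ (Fin n)) R).indicator (fun z => (‖E z‖₊ : ℝ≥0∞)) with hgdef
    have hgm : AEMeasurable g volume := hE_ae.enorm.indicator measurableSet_ball
    have hmap : Measure.map (R • ·) (volume : Measure (EuclideanSpace ℝ (Fin n))) =
        ENNReal.ofReal |((R : ℝ) ^ Module.finrank ℝ (EuclideanSpace ℝ (Fin n)))⁻¹| • volume :=
      Measure.map_addHaar_smul volume hR.ne'
    have hg' : AEMeasurable g (Measure.map (R • ·) volume) := by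
      rw [hmap]; exact hgm.smul_measure _
    have hRn : (0 : ℝ) < R ^ n := pow_pos hR n
    have h1 : (∫⁻ u, g (R • u)) = ENNReal.ofReal ((R ^ n : ℝ)⁻¹) * ∫⁻ z, g z := by
      have h := lintegral_map' hg' (measurable_const_smul (M := ℝ) R).aemeasurable
      rw [hmap, lintegral_smul_measure, finrank_euclideanSpace_fin,
        abs_of_pos (inv_pos.2 hRn)] at h
      exact h.symm
    have h0 : ∀ᵐ u : EuclideanSpace ℝ (Fin n), u ≠ 0 := by
      refine ae_iff.2 ?_
      have : {u : EuclideanSpace ℝ (Fin n) | ¬u ≠ 0} = {0} := by ext u; simp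
      rw [this]
      exact measure_singleton 0
    have h2 : (fun u => g (R • u)) =ᵐ[volume] fun u =>
        ENNReal.ofReal (R ^ (α - (n : ℝ))) *
          (ball (0 : EuclideanSpace ℝ (Fin n)) 1).indicator (fun z => (‖E z‖₊ : ℝ≥0∞)) u := by
      filter_upwards [h0] with u hu
      have hnorm : ‖R • u‖ = R * ‖u‖ := by
        rw [norm_smul, Real.norm_eq_abs, abs_of_pos hR]
      by_cases hmem : u ∈ ball (0 : EuclideanSpace ℝ (Fin n)) 1
      · have hmem' : R • u ∈ ball (0 : EuclideanSpace ℝ (Fin n)) R := by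
          rw [mem_ball_zero_iff] at hmem ⊢
          rw [hnorm]
          calc R * ‖u‖ < R * 1 := by exact mul_lt_mul_of_pos_left hmem hR
          _ = R := mul_one R
        rw [hgdef, Set.indicator_of_mem hmem', Set.indicator_of_mem hmem,
          hEhom R hR u hu, ← enorm_eq_nnnorm, ← enorm_eq_nnnorm, Real.enorm_eq_ofReal_abs,
          Real.enorm_eq_ofReal_abs,
          abs_mul, abs_of_nonneg (Real.rpow_nonneg hR.le _),
          ENNReal.ofReal_mul (Real.rpow_nonneg hR.le _)]
      · have hmem' : R • u ∉ ball (0 : EuclideanSpace ℝ (Fin n)) R := by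
          rw [mem_ball_zero_iff] at hmem ⊢
          push_neg at hmem ⊢
          rw [hnorm]
          calc R = R * 1 := (mul_one R).symm
          _ ≤ R * ‖u‖ := mul_le_mul_of_nonneg_left hmem hR.le
        rw [hgdef, Set.indicator_of_notMem hmem', Set.indicator_of_notMem hmem, mul_zero]
    have h3 : (∫⁻ u, g (R • u)) = ENNReal.ofReal (R ^ (α - (n : ℝ))) * κ := by
      rw [lintegral_congr_ae h2, lintegral_const_mul' _ _ ENNReal.ofReal_ne_top, hκdef,
        lintegral_indicator measurableSet_ball]
    have h4 : (∫⁻ z, g z) = ENNReal.ofReal (R ^ n : ℝ) * (∫⁻ u, g (R • u)) := by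
      rw [h1, ← mul_assoc, ← ENNReal.ofReal_mul hRn.le, mul_inv_cancel₀ hRn.ne',
        ENNReal.ofReal_one, one_mul]
    have h5 : (R : ℝ) ^ n * R ^ (α - (n : ℝ)) = R ^ α := by
      rw [← Real.rpow_natCast R n, ← Real.rpow_add hR]
      congr 1
      ring
    rw [← lintegral_indicator measurableSet_ball, ← hgdef, h4, h3, ← mul_assoc,
      ← ENNReal.ofReal_mul hRn.le, h5]
  -- far-field bound
  have hfar : ∀ R : ℝ, 0 < R → ∀ z : EuclideanSpace ℝ (Fin n), R ≤ ‖z‖ →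
      (‖E z‖₊ : ℝ≥0∞) ≤ ENNReal.ofReal (M * R ^ (α - (n : ℝ))) := by
    intro R hR z hz
    have hz0 : z ≠ 0 := by
      intro h; rw [h, norm_zero] at hz; linarith
    rw [← enorm_eq_nnnorm, Real.enorm_eq_ofReal_abs]
    refine ENNReal.ofReal_le_ofReal (le_trans (hpt z hz0) ?_)
    exact mul_le_mul_of_nonneg_left
      (Real.rpow_le_rpow_of_nonpos hR hz (by linarith)) hMpos.le
  -- the constant
  set c₁ : ℝ := 2 * κ' * (2 * M) ^ (α / ((n : ℝ) - α)) with hc₁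
  have hc₁0 : 0 ≤ c₁ := by positivity
  refine ⟨c₁ ^ β + 1, by positivity, ?_⟩
  intro f hf
  set I' : ℝ := ∫ y, |f y| with hI'def
  have hI'0 : 0 ≤ I' := integral_nonneg (fun y => abs_nonneg _)
  have hIeq : (∫⁻ y, (‖f y‖₊ : ℝ≥0∞)) = ENNReal.ofReal I' := by
    simp only [← enorm_eq_nnnorm]
    rw [← ofReal_integral_norm_eq_lintegral_enorm hf]
    simp [Real.norm_eq_abs, hI'def]
  -- measurability of the convolution integrand
  have hΦ : AEStronglyMeasurable (fun p : EuclideanSpace ℝ (Fin n) × EuclideanSpace ℝ (Fin n) => f p.2 * E (p.1 - p.2))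
      (volume.prod volume) := by
    have := hf.aestronglyMeasurable.convolution_integrand (ContinuousLinearMap.mul ℝ ℝ) hE_ae
    simpa using this
  have hΦe : AEMeasurable (fun p : EuclideanSpace ℝ (Fin n) × EuclideanSpace ℝ (Fin n) => (‖f p.2 * E (p.1 - p.2)‖₊ : ℝ≥0∞))
      (volume.prod volume) := hΦ.enorm
  have hFm : AEStronglyMeasurable (fun x : EuclideanSpace ℝ (Fin n) => ∫ y, f y * E (x - y)) volume :=
    hΦ.integral_prod_right'
  -- section measurability
  have hsecE : ∀ x : EuclideanSpace ℝ (Fin n), AEMeasurable (fun y : EuclideanSpace ℝ (Fin n) => E (x - y)) volume := by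
    intro x
    exact ((Measure.measurePreserving_sub_left volume x).aemeasurable_comp_iff
      (MeasurableEquiv.subLeft x).measurableEmbedding).2 hE_ae.aemeasurable
  have hsec : ∀ x : EuclideanSpace ℝ (Fin n), AEMeasurable (fun y : EuclideanSpace ℝ (Fin n) => (‖f y * E (x - y)‖₊ : ℝ≥0∞)) volume := by
    intro x
    exact (hf.aestronglyMeasurable.aemeasurable.mul (hsecE x)).aestronglyMeasurable.enorm
  -- pointwise bound of convolution by the lintegral
  have hFG : ∀ x : EuclideanSpace ℝ (Fin n), (‖∫ y, f y * E (x - y)‖₊ : ℝ≥0∞)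
      ≤ ∫⁻ y, (‖f y * E (x - y)‖₊ : ℝ≥0∞) := fun x =>
    enorm_integral_le_lintegral_enorm _
  constructor
  · -- the weak type bound
    intro t ht
    by_cases hI : I' = 0
    · -- trivial case: f vanishes a.e.
      have habs : (fun y => |f y|) =ᵐ[volume] 0 :=
        (integral_eq_zero_iff_of_nonneg (fun y => abs_nonneg (f y)) hf.abs).1 hI
      have hf0 : f =ᵐ[volume] 0 := by
        filter_upwards [habs] with y hy
        simpa [abs_eq_zero] using hy
      have hF0 : ∀ x : EuclideanSpace ℝ (Fin n), (∫ y, f y * E (x - y)) = 0 := by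
        intro x
        have hz : (fun y => f y * E (x - y)) =ᵐ[volume] 0 := by
          filter_upwards [hf0] with y hy
          simp [hy]
        exact integral_eq_zero_of_ae hz
      have hset : {x : EuclideanSpace ℝ (Fin n) | t < |∫ y, f y * E (x - y)|} = ∅ := by
        ext x
        simp [hF0 x, not_lt.2 ht.le]
      rw [hset]
      simp only [measure_empty]
      rw [ENNReal.zero_rpow_of_pos hβpos, mul_zero]
      exact zero_le
    have hI' : 0 < I' := lt_of_le_of_ne hI'0 (Ne.symm hI)
    -- choice of the radius
    set a : ℝ := 2 * M * I' / t with ha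
    have ha0 : 0 < a := by positivity
    set R : ℝ := a ^ (1 / ((n : ℝ) - α)) with hRdef
    have hR : 0 < R := Real.rpow_pos_of_pos ha0 _
    have hRexp : R ^ (α - (n : ℝ)) = t / (2 * M * I') := by
      rw [hRdef, ← Real.rpow_mul ha0.le]
      have he : 1 / ((n : ℝ) - α) * (α - (n : ℝ)) = -1 := by
        rw [div_mul_eq_mul_div, one_mul, show α - (n : ℝ) = -((n : ℝ) - α) by ring, neg_div,
          div_self hnα.ne']
      rw [he, Real.rpow_neg_one, ha, inv_div]
    have hRα : R ^ α = a ^ (α / ((n : ℝ) - α)) := by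
      rw [hRdef, ← Real.rpow_mul ha0.le]
      congr 1
      field_simp
    -- indicator functions
    set ind : EuclideanSpace ℝ (Fin n) → ℝ≥0∞ :=
      (ball (0 : EuclideanSpace ℝ (Fin n)) R).indicator (fun _ => (1 : ℝ≥0∞)) with hind
    set cind : EuclideanSpace ℝ (Fin n) → ℝ≥0∞ :=
      (ball (0 : EuclideanSpace ℝ (Fin n)) R)ᶜ.indicator (fun _ => (1 : ℝ≥0∞)) with hcind
    have hic : ∀ z : EuclideanSpace ℝ (Fin n), ind z + cind z = 1 := by
      intro z
      by_cases h : z ∈ ball (0 : EuclideanSpace ℝ (Fin n)) R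
      · rw [hind, hcind, Set.indicator_of_mem h, Set.indicator_of_notMem (by simpa using h),
          add_zero]
      · rw [hind, hcind, Set.indicator_of_notMem h, Set.indicator_of_mem (by simpa using h),
          zero_add]
    have hindm : Measurable ind := measurable_const.indicator measurableSet_ball
    have hcindm : Measurable cind := measurable_const.indicator measurableSet_ball.compl
    set G₁ : EuclideanSpace ℝ (Fin n) → ℝ≥0∞ :=
      fun x => ∫⁻ y, (‖f y * E (x - y)‖₊ : ℝ≥0∞) * ind (x - y) with hG₁
    have hG₁meas : AEMeasurable G₁ volume := by
      refine aux_aemeasurable_lintegral_prod_right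
        (f := fun p : EuclideanSpace ℝ (Fin n) × EuclideanSpace ℝ (Fin n) =>
          (‖f p.2 * E (p.1 - p.2)‖₊ : ℝ≥0∞) * ind (p.1 - p.2)) ?_
      exact hΦe.mul ((hindm.comp (measurable_fst.sub measurable_snd)).aemeasurable)
    -- splitting
    have hsplit : ∀ x : EuclideanSpace ℝ (Fin n),
        (∫⁻ y, (‖f y * E (x - y)‖₊ : ℝ≥0∞)) =
        G₁ x + ∫⁻ y, (‖f y * E (x - y)‖₊ : ℝ≥0∞) * cind (x - y) := by
      intro x
      have hptwise : ∀ y : EuclideanSpace ℝ (Fin n), (‖f y * E (x - y)‖₊ : ℝ≥0∞) =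
          (‖f y * E (x - y)‖₊ : ℝ≥0∞) * ind (x - y) +
          (‖f y * E (x - y)‖₊ : ℝ≥0∞) * cind (x - y) := fun y => by
        rw [← mul_add, hic, mul_one]
      have hm1 : AEMeasurable
          (fun y => (‖f y * E (x - y)‖₊ : ℝ≥0∞) * ind (x - y)) volume :=
        (hsec x).mul ((hindm.comp (measurable_const.sub measurable_id)).aemeasurable)
      calc (∫⁻ y, (‖f y * E (x - y)‖₊ : ℝ≥0∞))
          = ∫⁻ y, ((‖f y * E (x - y)‖₊ : ℝ≥0∞) * ind (x - y) +
              (‖f y * E (x - y)‖₊ : ℝ≥0∞) * cind (x - y)) := by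
            exact lintegral_congr fun y => hptwise y
        _ = G₁ x + ∫⁻ y, (‖f y * E (x - y)‖₊ : ℝ≥0∞) * cind (x - y) := by
            rw [lintegral_add_left' hm1]
    -- far part bound
    have hG₂le : ∀ x : EuclideanSpace ℝ (Fin n),
        (∫⁻ y, (‖f y * E (x - y)‖₊ : ℝ≥0∞) * cind (x - y)) ≤ ENNReal.ofReal (t / 2) := by
      intro x
      have hb : ∀ y : EuclideanSpace ℝ (Fin n),
          (‖f y * E (x - y)‖₊ : ℝ≥0∞) * cind (x - y) ≤
          (‖f y‖₊ : ℝ≥0∞) * ENNReal.ofReal (M * R ^ (α - (n : ℝ))) := by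
        intro y
        by_cases hmem : x - y ∈ ball (0 : EuclideanSpace ℝ (Fin n)) R
        · rw [hcind, Set.indicator_of_notMem (by simpa using hmem), mul_zero]
          exact zero_le
        · rw [hcind, Set.indicator_of_mem (by simpa using hmem), mul_one, nnnorm_mul,
            ENNReal.coe_mul]
          refine mul_le_mul_right (hfar R hR _ ?_) _
          rw [mem_ball_zero_iff, not_lt] at hmem
          exact hmem
      calc (∫⁻ y, (‖f y * E (x - y)‖₊ : ℝ≥0∞) * cind (x - y))
          ≤ ∫⁻ y, (‖f y‖₊ : ℝ≥0∞) * ENNReal.ofReal (M * R ^ (α - (n : ℝ))) :=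
            lintegral_mono hb
        _ = ENNReal.ofReal I' * ENNReal.ofReal (M * R ^ (α - (n : ℝ))) := by
            rw [lintegral_mul_const' _ _ ENNReal.ofReal_ne_top, hIeq]
        _ = ENNReal.ofReal (t / 2) := by
            rw [← ENNReal.ofReal_mul hI'0, hRexp]
            congr 1
            field_simp
    -- inclusion of superlevel sets
    have hsub : {x : EuclideanSpace ℝ (Fin n) | t < |∫ y, f y * E (x - y)|} ⊆
        {x : EuclideanSpace ℝ (Fin n) | ENNReal.ofReal (t / 2) ≤ G₁ x} := by
      intro x hx
      rw [Set.mem_setOf_eq] at hx ⊢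
      have h1 : ENNReal.ofReal t < ∫⁻ y, (‖f y * E (x - y)‖₊ : ℝ≥0∞) := by
        refine lt_of_lt_of_le ?_ (hFG x)
        rw [← enorm_eq_nnnorm, Real.enorm_eq_ofReal_abs]
        exact (ENNReal.ofReal_lt_ofReal_iff (lt_of_le_of_lt ht.le hx)).2 hx
      by_contra hcon
      push_neg at hcon
      have h2 : (∫⁻ y, (‖f y * E (x - y)‖₊ : ℝ≥0∞)) < ENNReal.ofReal t := by
        rw [hsplit x]
        calc G₁ x + (∫⁻ y, (‖f y * E (x - y)‖₊ : ℝ≥0∞) * cind (x - y))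
            ≤ G₁ x + ENNReal.ofReal (t / 2) := add_le_add_right (hG₂le x) _
          _ < ENNReal.ofReal (t / 2) + ENNReal.ofReal (t / 2) :=
            ENNReal.add_lt_add_right ENNReal.ofReal_ne_top hcon
          _ = ENNReal.ofReal t := by
            rw [← ENNReal.ofReal_add (by positivity) (by positivity)]
            congr 1
            ring
      exact absurd h1 (not_lt.2 h2.le)
    -- Tonelli for G₁
    have hswap : (∫⁻ x, G₁ x) = ENNReal.ofReal I' * (ENNReal.ofReal (R ^ α) * κ) := by
      have hu : AEMeasurable
          (fun p : EuclideanSpace ℝ (Fin n) × EuclideanSpace ℝ (Fin n) =>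
            (‖f p.2 * E (p.1 - p.2)‖₊ : ℝ≥0∞) * ind (p.1 - p.2)) (volume.prod volume) :=
        hΦe.mul ((hindm.comp (measurable_fst.sub measurable_snd)).aemeasurable)
      calc (∫⁻ x, G₁ x)
          = ∫⁻ y, ∫⁻ x, (‖f y * E (x - y)‖₊ : ℝ≥0∞) * ind (x - y) :=
            lintegral_lintegral_swap hu
        _ = ∫⁻ y, (‖f y‖₊ : ℝ≥0∞) * (ENNReal.ofReal (R ^ α) * κ) := by
            refine lintegral_congr fun y => ?_
            have hmul : ∀ x : EuclideanSpace ℝ (Fin n),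
                (‖f y * E (x - y)‖₊ : ℝ≥0∞) * ind (x - y) =
                (‖f y‖₊ : ℝ≥0∞) * ((‖E (x - y)‖₊ : ℝ≥0∞) * ind (x - y)) := fun x => by
              rw [nnnorm_mul, ENNReal.coe_mul, mul_assoc]
            simp_rw [hmul]
            rw [lintegral_const_mul' _ _ ENNReal.coe_ne_top]
            congr 1
            have hks := lintegral_sub_right_eq_self
              (fun z => (‖E z‖₊ : ℝ≥0∞) * ind z) y (μ := (volume : Measure (EuclideanSpace ℝ (Fin n))))
            rw [hks]
            have hindic : ∀ z : EuclideanSpace ℝ (Fin n), (‖E z‖₊ : ℝ≥0∞) * ind z =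
                (ball (0 : EuclideanSpace ℝ (Fin n)) R).indicator
                  (fun z => (‖E z‖₊ : ℝ≥0∞)) z := by
              intro z
              by_cases h : z ∈ ball (0 : EuclideanSpace ℝ (Fin n)) R
              · rw [hind, Set.indicator_of_mem h, Set.indicator_of_mem h, mul_one]
              · rw [hind, Set.indicator_of_notMem h, Set.indicator_of_notMem h, mul_zero]
            simp_rw [hindic]
            rw [lintegral_indicator measurableSet_ball]
            exact hscale R hR
        _ = ENNReal.ofReal I' * (ENNReal.ofReal (R ^ α) * κ) := by
            rw [lintegral_mul_const' _ _
              (ENNReal.mul_ne_top ENNReal.ofReal_ne_top hκtop), hIeq]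
    -- the measure bound
    set P : ℝ := I' * (R ^ α * κ') / (t / 2) with hP
    have hP0 : 0 ≤ P := by positivity
    have hmeasure : volume {x : EuclideanSpace ℝ (Fin n) | t < |∫ y, f y * E (x - y)|} ≤
        ENNReal.ofReal P := by
      calc volume {x : EuclideanSpace ℝ (Fin n) | t < |∫ y, f y * E (x - y)|}
          ≤ volume {x : EuclideanSpace ℝ (Fin n) | ENNReal.ofReal (t / 2) ≤ G₁ x} :=
            measure_mono hsub
        _ ≤ (∫⁻ x, G₁ x) / ENNReal.ofReal (t / 2) :=
            meas_ge_le_lintegral_div hG₁meas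
              (ne_of_gt (ENNReal.ofReal_pos.2 (half_pos ht))) ENNReal.ofReal_ne_top
        _ = ENNReal.ofReal (I' * (R ^ α * κ')) / ENNReal.ofReal (t / 2) := by
            rw [hswap, hκeq, ← ENNReal.ofReal_mul (Real.rpow_nonneg hR.le α),
              ← ENNReal.ofReal_mul hI'0]
        _ = ENNReal.ofReal P := by
            rw [hP, ENNReal.ofReal_div_of_pos (half_pos ht)]
    -- the real computation
    have hreal : t * P ^ β = c₁ ^ β * I' := by
      have hPval : P = c₁ * (I' / t) ^ ((n : ℝ) / ((n : ℝ) - α)) := by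
        have e1 : a ^ (α / ((n : ℝ) - α)) =
            (2 * M) ^ (α / ((n : ℝ) - α)) * (I' / t) ^ (α / ((n : ℝ) - α)) := by
          rw [ha, show 2 * M * I' / t = (2 * M) * (I' / t) by ring,
            Real.mul_rpow (by positivity) (by positivity)]
        have e2 : (I' / t) ^ ((n : ℝ) / ((n : ℝ) - α)) =
            (I' / t) * (I' / t) ^ (α / ((n : ℝ) - α)) := by
          have h3 : (n : ℝ) / ((n : ℝ) - α) = 1 + α / ((n : ℝ) - α) := by
            field_simp
            ring
          rw [h3, Real.rpow_add (by positivity), Real.rpow_one]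
        rw [hP, hRα, e1, hc₁, e2]
        field_simp
      have hq : ((I' / t) ^ ((n : ℝ) / ((n : ℝ) - α))) ^ β = I' / t := by
        rw [← Real.rpow_mul (by positivity)]
        have h4 : (n : ℝ) / ((n : ℝ) - α) * β = 1 := by
          rw [hβ]
          field_simp
        rw [h4, Real.rpow_one]
      rw [hPval, Real.mul_rpow hc₁0 (by positivity), hq]
      field_simp
    -- conclusion
    calc ENNReal.ofReal t *
          (volume {x : EuclideanSpace ℝ (Fin n) | t < |∫ y, f y * E (x - y)|}) ^ β
        ≤ ENNReal.ofReal t * (ENNReal.ofReal P) ^ β :=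
          mul_le_mul_right (ENNReal.rpow_le_rpow hmeasure hβpos.le) _
      _ = ENNReal.ofReal t * ENNReal.ofReal (P ^ β) := by
          rw [ENNReal.ofReal_rpow_of_nonneg hP0 hβpos.le]
      _ = ENNReal.ofReal (t * P ^ β) := (ENNReal.ofReal_mul ht.le).symm
      _ = ENNReal.ofReal (c₁ ^ β * I') := by rw [hreal]
      _ ≤ ENNReal.ofReal ((c₁ ^ β + 1) * I') := by
          refine ENNReal.ofReal_le_ofReal ?_
          nlinarith [hI'0]
  · -- local integrability
    rw [locallyIntegrable_iff]
    intro K hK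
    have hDfin : κ + ENNReal.ofReal M * volume K ≠ ⊤ :=
      ENNReal.add_ne_top.2 ⟨hκtop,
        ENNReal.mul_ne_top ENNReal.ofReal_ne_top hK.measure_lt_top.ne⟩
    set D : ℝ≥0∞ := κ + ENNReal.ofReal M * volume K with hD
    set ind1 : EuclideanSpace ℝ (Fin n) → ℝ≥0∞ :=
      (ball (0 : EuclideanSpace ℝ (Fin n)) 1).indicator (fun z => (‖E z‖₊ : ℝ≥0∞)) with hind1
    have key : ∀ y : EuclideanSpace ℝ (Fin n),
        (∫⁻ x in K, (‖E (x - y)‖₊ : ℝ≥0∞)) ≤ D := by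
      intro y
      have hptw : ∀ᵐ x ∂(volume.restrict K),
          (‖E (x - y)‖₊ : ℝ≥0∞) ≤ ind1 (x - y) + ENNReal.ofReal M := by
        have h0 : ∀ᵐ x : EuclideanSpace ℝ (Fin n) ∂volume.restrict K, x - y ≠ 0 := by
          refine ae_restrict_of_ae (ae_iff.2 ?_)
          have he : {x : EuclideanSpace ℝ (Fin n) | ¬x - y ≠ 0} = {y} := by
            ext u; simp [sub_eq_zero]
          rw [he]
          exact measure_singleton y
        filter_upwards [h0] with x hx
        by_cases hmem : x - y ∈ ball (0 : EuclideanSpace ℝ (Fin n)) 1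
        · rw [hind1, Set.indicator_of_mem hmem]; exact le_self_add
        · rw [hind1, Set.indicator_of_notMem hmem, zero_add]
          rw [mem_ball_zero_iff, not_lt] at hmem
          rw [← enorm_eq_nnnorm, Real.enorm_eq_ofReal_abs]
          refine ENNReal.ofReal_le_ofReal (le_trans (hpt _ hx) ?_)
          calc M * ‖x - y‖ ^ (α - (n : ℝ)) ≤ M * 1 := by
                refine mul_le_mul_of_nonneg_left ?_ hMpos.le
                exact Real.rpow_le_one_of_one_le_of_nonpos hmem (by linarith)
            _ = M := mul_one M
      calc (∫⁻ x in K, (‖E (x - y)‖₊ : ℝ≥0∞))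
          ≤ ∫⁻ x in K, (ind1 (x - y) + ENNReal.ofReal M) := lintegral_mono_ae hptw
        _ = (∫⁻ x in K, ind1 (x - y)) + ENNReal.ofReal M * volume K := by
            rw [lintegral_add_right _ measurable_const, setLIntegral_const]
        _ ≤ (∫⁻ x, ind1 (x - y)) + ENNReal.ofReal M * volume K := by
            gcongr
            exact Measure.restrict_le_self
        _ = D := by
            rw [lintegral_sub_right_eq_self ind1 y, hind1,
              lintegral_indicator measurableSet_ball]
    have hmeasprod : AEMeasurable
        (fun p : EuclideanSpace ℝ (Fin n) × EuclideanSpace ℝ (Fin n) =>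
          (‖f p.2 * E (p.1 - p.2)‖₊ : ℝ≥0∞)) ((volume.restrict K).prod volume) := by
      have hre : ((volume : Measure (EuclideanSpace ℝ (Fin n))).restrict K).prod volume
          = ((volume : Measure (EuclideanSpace ℝ (Fin n))).prod volume).restrict
              (K ×ˢ (univ : Set (EuclideanSpace ℝ (Fin n)))) := by
        rw [← Measure.prod_restrict, Measure.restrict_univ]
      rw [hre]
      exact hΦe.restrict
    have hfin : (∫⁻ x in K, (‖∫ y, f y * E (x - y)‖₊ : ℝ≥0∞)) < ⊤ := by
      calc (∫⁻ x in K, (‖∫ y, f y * E (x - y)‖₊ : ℝ≥0∞))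
          ≤ ∫⁻ x in K, ∫⁻ y, (‖f y * E (x - y)‖₊ : ℝ≥0∞) := lintegral_mono fun x => hFG x
        _ = ∫⁻ y, ∫⁻ x in K, (‖f y * E (x - y)‖₊ : ℝ≥0∞) :=
            lintegral_lintegral_swap hmeasprod
        _ ≤ ∫⁻ y, (‖f y‖₊ : ℝ≥0∞) * D := by
            refine lintegral_mono fun y => ?_
            have hmul : ∀ x : EuclideanSpace ℝ (Fin n),
                (‖f y * E (x - y)‖₊ : ℝ≥0∞) = (‖f y‖₊ : ℝ≥0∞) * ‖E (x - y)‖₊ := fun x => by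
              rw [nnnorm_mul, ENNReal.coe_mul]
            simp_rw [hmul]
            rw [lintegral_const_mul' _ _ ENNReal.coe_ne_top]
            exact mul_le_mul_right (key y) _
        _ = ENNReal.ofReal I' * D := by
            rw [lintegral_mul_const' D _ hDfin, hIeq]
        _ < ⊤ := ENNReal.mul_lt_top ENNReal.ofReal_lt_top hDfin.lt_top
    exact ⟨hFm.restrict, hfin⟩
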